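/- arXiv:2405.09511 — 2 statements merged into one kernel-verified Lean document; each statement's English description precedes it below -/
import Mathlib

section
/- Let H be a (real) inner product space, let w_1, …, w_n ∈ H, and let I_1, …, I_n be {0,1}-valued random variables with P(I_i=1)=p for all i and Cov(I_i, I_j) = −q ≤ 0 for all i ≠ j with q ≤ p(1−p)/(n−1). Then E[‖Σ_{i=1}^n w_i (I_i − p)‖²] ≤ (n/(n−1))·p(1−p)·Σ_{i=1}^n ‖w_i‖². -/
open MeasureTheory

/-- Variance bound for a weighted sum of negatively correlated Bernoulli
indicators with values in an inner product space. -/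
theorem weighted_sum_variance_bound
    {Ω : Type*} [MeasurableSpace Ω] (μ : Measure Ω) [IsProbabilityMeasure μ]
    {H : Type*} [NormedAddCommGroup H] [InnerProductSpace ℝ H]
    (n : ℕ) (hn : 2 ≤ n)
    (p q : ℝ) (hp0 : 0 < p) (hp1 : p < 1)
    (hq0 : 0 ≤ q) (hq : q ≤ p * (1 - p) / ((n : ℝ) - 1))
    (w : Fin n → H)
    (I : Fin n → Ω → ℝ)
    (hMeas : ∀ i, Measurable (I i))
    (h01 : ∀ i ω, I i ω = 0 ∨ I i ω = 1)
    (hmean : ∀ i, ∫ ω, I i ω ∂μ = p)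
    (hcov : ∀ i j, i ≠ j → ∫ ω, (I i ω - p) * (I j ω - p) ∂μ = -q) :
    ∫ ω, ‖∑ i : Fin n, (I i ω - p) • w i‖^2 ∂μ ≤
      ((n : ℝ) / ((n : ℝ) - 1)) * (p * (1 - p)) * ∑ i : Fin n, ‖w i‖^2 := by
  have hn1 : (1:ℝ) ≤ (n:ℝ) - 1 := by
    have : (2:ℝ) ≤ (n:ℝ) := by exact_mod_cast hn
    linarith
  set f : Fin n → Ω → ℝ := fun i ω => I i ω - p with hf
  have hfm : ∀ i, Measurable (f i) := fun i => (hMeas i).sub measurable_const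
  have hfb : ∀ i ω, |f i ω| ≤ 1 := by
    intro i ω
    rcases h01 i ω with h | h <;> rw [abs_le] <;>
      constructor <;> simp [hf, h] <;> linarith
  have hint : ∀ i j, Integrable (fun ω => f i ω * f j ω) μ := by
    intro i j
    refine Integrable.mono' (integrable_const (1:ℝ))
      (((hfm i).mul (hfm j)).aestronglyMeasurable) ?_
    filter_upwards with ω
    rw [Real.norm_eq_abs, abs_mul]
    calc |f i ω| * |f j ω| ≤ 1 * 1 :=
        mul_le_mul (hfb i ω) (hfb j ω) (abs_nonneg _) zero_le_one
      _ = 1 := by ring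
  -- value of the covariance integrals
  have hIint : ∀ i, Integrable (I i) μ := by
    intro i
    refine Integrable.mono' (integrable_const (1:ℝ)) ((hMeas i).aestronglyMeasurable) ?_
    filter_upwards with ω
    rcases h01 i ω with h | h <;> simp [h]
  have hvar : ∀ i, ∫ ω, f i ω * f i ω ∂μ = p * (1 - p) := by
    intro i
    have h1 : ∀ ω, f i ω * f i ω = (1 - 2*p) * I i ω + p^2 := by
      intro ω
      have : I i ω * I i ω = I i ω := by rcases h01 i ω with h | h <;> simp [h]
      simp only [hf]; nlinarith [this]
    calc ∫ ω, f i ω * f i ω ∂μ = ∫ ω, ((1 - 2*p) * I i ω + p^2) ∂μ := by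
          simp_rw [h1]
      _ = (1 - 2*p) * (∫ ω, I i ω ∂μ) + p^2 := by
          rw [integral_add ((hIint i).const_mul _) (integrable_const _),
            integral_const_mul, integral_const]
          simp
      _ = p * (1 - p) := by rw [hmean i]; ring
  have hval : ∀ i j, ∫ ω, f i ω * f j ω ∂μ =
      if i = j then p * (1 - p) else -q := by
    intro i j
    by_cases h : i = j
    · subst h; simp [hvar i]
    · simp only [h, if_false]
      exact hcov i j h
  -- expand the norm squared
  have hexp : ∀ ω, ‖∑ i : Fin n, f i ω • w i‖^2 =
      ∑ i : Fin n, ∑ j : Fin n, f i ω * f j ω * (inner ℝ (w i) (w j) : ℝ) := by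
    intro ω
    rw [← real_inner_self_eq_norm_sq, sum_inner]
    refine Finset.sum_congr rfl fun i _ => ?_
    rw [inner_sum]
    refine Finset.sum_congr rfl fun j _ => ?_
    rw [real_inner_smul_left, real_inner_smul_right]
    ring
  have hintegral : ∫ ω, ‖∑ i : Fin n, f i ω • w i‖^2 ∂μ =
      ∑ i : Fin n, ∑ j : Fin n,
        (if i = j then p * (1 - p) else -q) * (inner ℝ (w i) (w j) : ℝ) := by
    simp_rw [hexp]
    rw [integral_finset_sum _ (fun i _ => integrable_finset_sum _
      (fun j _ => (hint i j).mul_const _))]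
    refine Finset.sum_congr rfl fun i _ => ?_
    rw [integral_finset_sum _ (fun j _ => (hint i j).mul_const _)]
    refine Finset.sum_congr rfl fun j _ => ?_
    rw [integral_mul_const, hval i j]
  have hT : (0:ℝ) ≤ ∑ i : Fin n, ∑ j : Fin n, (inner ℝ (w i) (w j) : ℝ) := by
    have : ∑ i : Fin n, ∑ j : Fin n, (inner ℝ (w i) (w j) : ℝ) =
        (inner ℝ (∑ i : Fin n, w i) (∑ j : Fin n, w j) : ℝ) := by
      rw [sum_inner]; exact Finset.sum_congr rfl fun i _ => (inner_sum _ _ _).symm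
    rw [this]
    exact real_inner_self_nonneg
  have hsplit : ∑ i : Fin n, ∑ j : Fin n,
      (if i = j then p * (1 - p) else -q) * (inner ℝ (w i) (w j) : ℝ) =
      (-q) * (∑ i : Fin n, ∑ j : Fin n, (inner ℝ (w i) (w j) : ℝ)) +
      (p * (1 - p) + q) * ∑ i : Fin n, ‖w i‖^2 := by
    have : ∀ i j : Fin n, (if i = j then p * (1 - p) else -q) * (inner ℝ (w i) (w j) : ℝ) =
        (-q) * (inner ℝ (w i) (w j) : ℝ) +
        (if j = i then (p * (1 - p) + q) * (inner ℝ (w i) (w j) : ℝ) else 0) := by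
      intro i j
      by_cases h : i = j
      · subst h; rw [if_pos rfl, if_pos rfl]; ring
      · have h' : ¬ (j = i) := fun hh => h hh.symm
        rw [if_neg h, if_neg h']; ring
    simp only [this, Finset.sum_add_distrib, Finset.sum_ite_eq', Finset.mem_univ, if_true,
      real_inner_self_eq_norm_sq]
    rw [Finset.mul_sum, Finset.mul_sum]
    congr 1
    refine Finset.sum_congr rfl fun i _ => ?_
    rw [Finset.mul_sum]
  have hS : (0:ℝ) ≤ ∑ i : Fin n, ‖w i‖^2 := by
    exact Finset.sum_nonneg fun i _ => sq_nonneg _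
  have hcoef : p * (1 - p) + q ≤ ((n : ℝ) / ((n : ℝ) - 1)) * (p * (1 - p)) := by
    have hpos : (0:ℝ) < (n:ℝ) - 1 := by linarith
    rw [div_mul_eq_mul_div, le_div_iff₀ hpos]
    have := mul_le_mul_of_nonneg_right hq (le_of_lt hpos)
    rw [div_mul_cancel₀ _ (ne_of_gt hpos)] at this
    nlinarith
  calc ∫ ω, ‖∑ i : Fin n, (I i ω - p) • w i‖^2 ∂μ
      = (-q) * (∑ i : Fin n, ∑ j : Fin n, (inner ℝ (w i) (w j) : ℝ)) +
        (p * (1 - p) + q) * ∑ i : Fin n, ‖w i‖^2 := by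
        rw [← hsplit, ← hintegral]
    _ ≤ 0 + ((n : ℝ) / ((n : ℝ) - 1)) * (p * (1 - p)) * ∑ i : Fin n, ‖w i‖^2 := by
        gcongr ?_ + ?_
        · exact mul_nonpos_of_nonpos_of_nonneg (by linarith) hT
        · exact mul_le_mul_of_nonneg_right hcoef hS
    _ = ((n : ℝ) / ((n : ℝ) - 1)) * (p * (1 - p)) * ∑ i : Fin n, ‖w i‖^2 := by ring
end

section
/- Let H be a real Hilbert space, W ⊂ H a bounded set with Chebyshev radius R = rad(W), and r a random bag of indices from [n] with P(i ∈ r) = p < 1 for all i and Cov(1{i∈r}, 1{j∈r}) ≤ 0 for i ≠ j, and with the pairwise covariance equal to a common value −q by symmetry. Let ŵ^r ∈ W be determined by r, set ŵ = E[ŵ^r] and ŵ^{\i} = E[ŵ^r | i ∉ r]. Then (1/n)·Σ_{i=1}^n ‖ŵ − ŵ^{\i}‖² ≤ (R²/(n−1))·p/(1−p). -/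
open MeasureTheory
open scoped RealInnerProductSpace

/-- The centered membership indicator `1{i ∈ r} - p`. -/
noncomputable def bagX {Ω : Type*} {n : ℕ} (r : Ω → List (Fin n)) (p : ℝ) (i : Fin n)
    (ω : Ω) : ℝ :=
  Set.indicator {ω | i ∈ r ω} (fun _ => (1 : ℝ)) ω - p

section Aux

variable {Ω : Type*} [MeasurableSpace Ω] {μ : Measure Ω} [IsProbabilityMeasure μ]
  {n : ℕ} {r : Ω → List (Fin n)} {p : ℝ}

lemma bagInd_int (hrMeas : ∀ i : Fin n, MeasurableSet {ω | i ∈ r ω}) (i : Fin n) :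
    Integrable (Set.indicator {ω | i ∈ r ω} (fun _ => (1 : ℝ))) μ :=
  (integrable_const (1 : ℝ)).indicator (hrMeas i)

lemma bagX_int (hrMeas : ∀ i : Fin n, MeasurableSet {ω | i ∈ r ω}) (i : Fin n) :
    Integrable (bagX r p i) μ := by
  have : bagX r p i = fun ω => Set.indicator {ω | i ∈ r ω} (fun _ => (1 : ℝ)) ω - p := rfl
  rw [this]
  exact (bagInd_int hrMeas i).sub (integrable_const p)

lemma bagX_integral (hrMeas : ∀ i : Fin n, MeasurableSet {ω | i ∈ r ω})
    (hp : ∀ i : Fin n, (μ {ω | i ∈ r ω}).toReal = p) (i : Fin n) :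
    ∫ ω, bagX r p i ω ∂μ = 0 := by
  have : (fun ω => bagX r p i ω)
      = fun ω => Set.indicator {ω | i ∈ r ω} (fun _ => (1 : ℝ)) ω - p := rfl
  rw [this, integral_sub (bagInd_int hrMeas i) (integrable_const p),
    integral_indicator_const (1 : ℝ) (hrMeas i), integral_const]
  simp [measureReal_def, hp i]

lemma bagX_mul_int (hrMeas : ∀ i : Fin n, MeasurableSet {ω | i ∈ r ω}) (i j : Fin n) :
    Integrable (fun ω => bagX r p i ω * bagX r p j ω) μ := by
  have hff : (fun ω => Set.indicator {ω | i ∈ r ω} (fun _ => (1 : ℝ)) ω *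
      Set.indicator {ω | j ∈ r ω} (fun _ => (1 : ℝ)) ω)
      = ({ω | i ∈ r ω} ∩ {ω | j ∈ r ω}).indicator (fun _ => (1 : ℝ)) := by
    funext ω
    by_cases hi : ω ∈ {ω | i ∈ r ω} <;> by_cases hj : ω ∈ {ω | j ∈ r ω} <;>
      simp [Set.indicator_apply, hi, hj]
  have h1 : (fun ω => bagX r p i ω * bagX r p j ω)
      = fun ω => (Set.indicator {ω | i ∈ r ω} (fun _ => (1 : ℝ)) ω *
          Set.indicator {ω | j ∈ r ω} (fun _ => (1 : ℝ)) ω)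
          - p * Set.indicator {ω | i ∈ r ω} (fun _ => (1 : ℝ)) ω
          - p * Set.indicator {ω | j ∈ r ω} (fun _ => (1 : ℝ)) ω + p * p := by
    funext ω; simp only [bagX]; ring
  rw [h1]
  have hint : Integrable (fun ω => Set.indicator {ω | i ∈ r ω} (fun _ => (1 : ℝ)) ω *
      Set.indicator {ω | j ∈ r ω} (fun _ => (1 : ℝ)) ω) μ := by
    rw [hff]
    exact (integrable_const (1 : ℝ)).indicator ((hrMeas i).inter (hrMeas j))
  exact (((hint.sub ((bagInd_int hrMeas i).const_mul p)).sub
    ((bagInd_int hrMeas j).const_mul p)).add (integrable_const (p * p)))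

lemma bagX_sq_integral (hrMeas : ∀ i : Fin n, MeasurableSet {ω | i ∈ r ω})
    (hp : ∀ i : Fin n, (μ {ω | i ∈ r ω}).toReal = p) (i : Fin n) :
    ∫ ω, bagX r p i ω * bagX r p i ω ∂μ = p - p ^ 2 := by
  have hff : ∀ ω, Set.indicator {ω | i ∈ r ω} (fun _ => (1 : ℝ)) ω *
      Set.indicator {ω | i ∈ r ω} (fun _ => (1 : ℝ)) ω
      = Set.indicator {ω | i ∈ r ω} (fun _ => (1 : ℝ)) ω := by
    intro ω; by_cases hi : ω ∈ {ω | i ∈ r ω} <;> simp [Set.indicator_apply, hi]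
  have h1 : (fun ω => bagX r p i ω * bagX r p i ω)
      = fun ω => Set.indicator {ω | i ∈ r ω} (fun _ => (1 : ℝ)) ω
          - 2 * p * Set.indicator {ω | i ∈ r ω} (fun _ => (1 : ℝ)) ω + p ^ 2 := by
    funext ω
    have : bagX r p i ω * bagX r p i ω
        = Set.indicator {ω | i ∈ r ω} (fun _ => (1 : ℝ)) ω *
          Set.indicator {ω | i ∈ r ω} (fun _ => (1 : ℝ)) ω
          - 2 * p * Set.indicator {ω | i ∈ r ω} (fun _ => (1 : ℝ)) ω + p ^ 2 := by
      simp only [bagX]; ring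
    rw [this, hff ω]
  have hint1 : Integrable (fun ω => 2 * p * Set.indicator {ω | i ∈ r ω} (fun _ => (1:ℝ)) ω) μ :=
    (bagInd_int hrMeas i).const_mul (2 * p)
  have hint2 : Integrable (fun ω => Set.indicator {ω | i ∈ r ω} (fun _ => (1:ℝ)) ω
      - 2 * p * Set.indicator {ω | i ∈ r ω} (fun _ => (1:ℝ)) ω) μ :=
    (bagInd_int hrMeas i).sub hint1
  rw [h1, integral_add hint2
    (integrable_const _), integral_sub (bagInd_int hrMeas i)
    hint1, integral_const_mul,
    integral_indicator_const (1 : ℝ) (hrMeas i), integral_const]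
  simp [measureReal_def, hp i]
  ring

lemma bagX_smul_int {H : Type*} [NormedAddCommGroup H] [NormedSpace ℝ H]
    (hrMeas : ∀ i : Fin n, MeasurableSet {ω | i ∈ r ω})
    {g : Ω → H} (hg : Integrable g μ) (i : Fin n) :
    Integrable (fun ω => bagX r p i ω • g ω) μ := by
  have h1 : (fun ω => bagX r p i ω • g ω)
      = fun ω => Set.indicator {ω | i ∈ r ω} g ω - p • g ω := by
    funext ω
    by_cases hi : ω ∈ {ω | i ∈ r ω} <;>
      simp [bagX, Set.indicator_apply, hi, sub_smul, one_smul, zero_smul]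
  rw [h1]
  exact (hg.indicator (hrMeas i)).sub (hg.smul p)

end Aux

/-- Inner product expansion of the squared norm of a weighted sum. -/
lemma norm_sq_sum_smul {H : Type*} [NormedAddCommGroup H] [InnerProductSpace ℝ H]
    {n : ℕ} (a : Fin n → ℝ) (D : Fin n → H) :
    ‖∑ i, a i • D i‖ ^ 2 = ∑ i, ∑ j, (a i * a j) * ⟪D i, D j⟫ := by
  rw [← real_inner_self_eq_norm_sq, sum_inner]
  refine Finset.sum_congr rfl fun i _ => ?_
  rw [real_inner_smul_left, inner_sum, Finset.mul_sum]
  refine Finset.sum_congr rfl fun j _ => ?_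
  rw [real_inner_smul_right]; ring

/-- Elementary AM–GM: `a*b ≤ (t*a² + t⁻¹*b²)/2` for `t > 0`. -/
lemma aux_amgm {a b t : ℝ} (ht : 0 < t) : a * b ≤ (t * a ^ 2 + t⁻¹ * b ^ 2) / 2 := by
  rw [le_div_iff₀ (by norm_num : (0:ℝ) < 2), ← mul_le_mul_iff_right₀ ht]
  have h2 : t * (t * a ^ 2 + t⁻¹ * b ^ 2) = t ^ 2 * a ^ 2 + b ^ 2 := by
    field_simp
  rw [h2]
  nlinarith [sq_nonneg (t * a - b)]

/-- If `a ≤ (t*(b*a) + t⁻¹*R2)/2` for all `t > 0`, with everything nonnegative,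
then `a ≤ b * R2`. -/
lemma aux_t_trick {a b R2 : ℝ} (ha : 0 ≤ a) (hb : 0 ≤ b) (hR2 : 0 ≤ R2)
    (h : ∀ t : ℝ, 0 < t → a ≤ (t * (b * a) + t⁻¹ * R2) / 2) : a ≤ b * R2 := by
  rcases eq_or_lt_of_le hb with hb0 | hbpos
  · -- b = 0
    rw [← hb0, zero_mul]
    by_contra hlt
    push_neg at hlt
    have ht := h ((R2 + 1) / a) (div_pos (by linarith) hlt)
    rw [← hb0] at ht
    simp only [zero_mul, mul_zero, zero_add] at ht
    rw [inv_div] at ht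
    rw [div_mul_eq_mul_div, div_div, le_div_iff₀ (by positivity)] at ht
    nlinarith
  · have ht := h b⁻¹ (inv_pos.mpr hbpos)
    have e : b⁻¹ * (b * a) = a := by field_simp
    rw [e, inv_inv] at ht
    linarith

set_option maxHeartbeats 2000000 in
/-- Stability of derandomized bagging in a Hilbert space:
(1/n)·Σᵢ ‖ŵ − ŵ^{∖i}‖² ≤ (R²/(n−1))·p/(1−p). -/
theorem hilbert_bagging_stability
    {Ω : Type*} [MeasurableSpace Ω] (μ : Measure Ω) [IsProbabilityMeasure μ]
    {H : Type*} [NormedAddCommGroup H] [InnerProductSpace ℝ H] [CompleteSpace H]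
    (W : Set H) (hWne : W.Nonempty) (hWbdd : Bornology.IsBounded W)
    (n : ℕ) (hn : 2 ≤ n)
    (r : Ω → List (Fin n))
    (hrMeas : ∀ i : Fin n, MeasurableSet {ω | i ∈ r ω})
    (p q : ℝ) (hp0 : 0 ≤ p) (hp1 : p < 1) (hq0 : 0 ≤ q)
    (hp : ∀ i : Fin n, (μ {ω | i ∈ r ω}).toReal = p)
    (hcov : ∀ i j : Fin n, i ≠ j →
      ∫ ω, (Set.indicator {ω | i ∈ r ω} (fun _ => (1 : ℝ)) ω - p) *
            (Set.indicator {ω | j ∈ r ω} (fun _ => (1 : ℝ)) ω - p) ∂μ = -q)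
    (wr : Ω → H) (hwrW : ∀ ω, wr ω ∈ W) (hwrInt : Integrable wr μ)
    (hwrSq : Integrable (fun ω => ‖wr ω‖^2) μ) :
    (1 / (n : ℝ)) * ∑ i : Fin n,
        ‖(∫ ω, wr ω ∂μ) -
          (1 - p)⁻¹ • (∫ ω, Set.indicator {ω | i ∉ r ω} wr ω ∂μ)‖^2 ≤
      ((⨅ w : W, ⨆ w' : W, ‖(w : H) - (w' : H)‖)^2 / ((n : ℝ) - 1)) *
        (p / (1 - p)) := by
  classical
  have : Nonempty W := hWne.to_subtype
  have hN2 : (2 : ℝ) ≤ (n : ℝ) := by exact_mod_cast hn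
  have hNpos : (0 : ℝ) < (n : ℝ) := by linarith
  have h1p : (0 : ℝ) < 1 - p := by linarith
  -- moments
  have hm : ∀ i j : Fin n, ∫ ω, bagX r p i ω * bagX r p j ω ∂μ
      = if i = j then p - p ^ 2 else -q := by
    intro i j
    by_cases hij : i = j
    · subst hij
      simp [bagX_sq_integral hrMeas hp i]
    · simp only [hij, if_false]
      simpa [bagX] using hcov i j hij
  set D : Fin n → H := fun i => ∫ ω, bagX r p i ω • wr ω ∂μ with hD
  set S : ℝ := ∑ i, ‖D i‖ ^ 2 with hS
  set K : ℝ := p - p ^ 2 + q with hKdef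
  clear_value D S K
  have hKnonneg : 0 ≤ K := by rw [hKdef]; nlinarith
  have hSnonneg : 0 ≤ S := by rw [hS]; exact Finset.sum_nonneg fun i _ => sq_nonneg _
  -- q ≤ (p - p²)/(n-1)
  have hq_le : ((n : ℝ) - 1) * q ≤ p - p ^ 2 := by
    have h0 : (0 : ℝ) ≤ ∫ ω, (∑ i, bagX r p i ω) ^ 2 ∂μ :=
      integral_nonneg fun ω => sq_nonneg _
    have hexp : (fun ω => (∑ i, bagX r p i ω) ^ 2)
        = fun ω => ∑ i, ∑ j, bagX r p i ω * bagX r p j ω := by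
      funext ω; rw [sq, Finset.sum_mul_sum]
    rw [hexp, integral_finset_sum _ (fun i _ => integrable_finset_sum _
      (fun j _ => bagX_mul_int hrMeas i j))] at h0
    have : ∀ i ∈ Finset.univ, ∫ ω, (∑ j, bagX r p i ω * bagX r p j ω) ∂μ
        = ∑ j, ∫ ω, bagX r p i ω * bagX r p j ω ∂μ := fun i _ =>
      integral_finset_sum _ fun j _ => bagX_mul_int hrMeas i j
    rw [Finset.sum_congr rfl this] at h0
    simp only [hm] at h0
    have hsum : ∑ i : Fin n, ∑ j : Fin n, (if i = j then p - p ^ 2 else -q)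
        = (n : ℝ) * (p - p ^ 2 + q) - ((n : ℝ) * (n : ℝ)) * q := by
      have : ∀ i j : Fin n, (if i = j then p - p ^ 2 else -q)
          = (if i = j then (p - p ^ 2 + q) else 0) + (-q) := by
        intro i j; split_ifs <;> ring
      simp only [this, Finset.sum_add_distrib, Finset.sum_ite_eq, Finset.mem_univ, if_true,
        Finset.sum_const, Finset.card_univ, Fintype.card_fin, nsmul_eq_mul]
      ring
    rw [hsum] at h0
    nlinarith
  -- second moment of U
  have hU2_int : Integrable (fun ω => ‖∑ i, bagX r p i ω • D i‖ ^ 2) μ := by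
    have : (fun ω => ‖∑ i, bagX r p i ω • D i‖ ^ 2)
        = fun ω => ∑ i, ∑ j, (bagX r p i ω * bagX r p j ω) * ⟪D i, D j⟫ := by
      funext ω; exact norm_sq_sum_smul _ _
    rw [this]
    exact integrable_finset_sum _ fun i _ => integrable_finset_sum _ fun j _ =>
      (bagX_mul_int hrMeas i j).mul_const _
  have hintU2 : ∫ ω, ‖∑ i, bagX r p i ω • D i‖ ^ 2 ∂μ
      ≤ K * S := by
    have h1 : (fun ω => ‖∑ i, bagX r p i ω • D i‖ ^ 2)
        = fun ω => ∑ i, ∑ j, (bagX r p i ω * bagX r p j ω) * ⟪D i, D j⟫ := by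
      funext ω; exact norm_sq_sum_smul _ _
    rw [h1, integral_finset_sum _ (fun i _ => integrable_finset_sum _
      (fun j _ => (bagX_mul_int hrMeas i j).mul_const _))]
    have h2 : ∀ i ∈ Finset.univ,
        ∫ ω, (∑ j, (bagX r p i ω * bagX r p j ω) * ⟪D i, D j⟫) ∂μ
        = ∑ j, (if i = j then p - p ^ 2 else -q) * ⟪D i, D j⟫ := by
      intro i _
      rw [integral_finset_sum _ fun j _ => (bagX_mul_int hrMeas i j).mul_const _]
      exact Finset.sum_congr rfl fun j _ => by rw [integral_mul_const, hm i j]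
    rw [Finset.sum_congr rfl h2]
    have h3 : ∀ i j : Fin n, (if i = j then p - p ^ 2 else -q) * ⟪D i, D j⟫
        = (if i = j then K * ⟪D i, D j⟫ else 0) + (-q) * ⟪D i, D j⟫ := by
      intro i j; split_ifs with h
      · rw [hKdef]; ring
      · ring
    simp only [h3, Finset.sum_add_distrib, Finset.sum_ite_eq, Finset.mem_univ, if_true]
    have hTT : ∑ i : Fin n, ∑ j : Fin n, (-q) * ⟪D i, D j⟫
        = -q * ‖∑ i, D i‖ ^ 2 := by
      rw [← real_inner_self_eq_norm_sq, sum_inner]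
      rw [Finset.mul_sum]
      refine Finset.sum_congr rfl fun i _ => ?_
      rw [inner_sum, Finset.mul_sum]
    rw [hTT]
    have hdiag : ∑ i : Fin n, K * ⟪D i, D i⟫ = K * S := by
      rw [hS, Finset.mul_sum]
      exact Finset.sum_congr rfl fun i _ => by rw [real_inner_self_eq_norm_sq]
    rw [hdiag]
    nlinarith [sq_nonneg ‖∑ i, D i‖]
  -- key identity: ŵ - ŵ^{∖i} = (1-p)⁻¹ • D i
  have hkey1 : ∀ i : Fin n,
      (∫ ω, wr ω ∂μ) - (1 - p)⁻¹ • (∫ ω, Set.indicator {ω | i ∉ r ω} wr ω ∂μ)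
      = (1 - p)⁻¹ • D i := by
    intro i
    have hcompl : {ω | i ∉ r ω} = {ω | i ∈ r ω}ᶜ := rfl
    have hind : (∫ ω, Set.indicator {ω | i ∉ r ω} wr ω ∂μ)
        = (∫ ω, wr ω ∂μ) - ∫ ω, Set.indicator {ω | i ∈ r ω} wr ω ∂μ := by
      rw [hcompl]
      have hpt : (fun ω => Set.indicator ({ω | i ∈ r ω}ᶜ) wr ω)
          = fun ω => wr ω - Set.indicator {ω | i ∈ r ω} wr ω := by
        rw [Set.indicator_compl]; rfl
      rw [hpt, integral_sub hwrInt (hwrInt.indicator (hrMeas i))]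
    have hDi : D i = (∫ ω, Set.indicator {ω | i ∈ r ω} wr ω ∂μ)
        - p • ∫ ω, wr ω ∂μ := by
      have hpt : (fun ω => bagX r p i ω • wr ω)
          = fun ω => Set.indicator {ω | i ∈ r ω} wr ω - p • wr ω := by
        funext ω
        by_cases hω : ω ∈ {ω | i ∈ r ω} <;>
          simp [bagX, Set.indicator_apply, hω, sub_smul, one_smul]
      have hint1 : Integrable (fun ω => p • wr ω) μ := hwrInt.smul p
      rw [hD]
      simp only [hpt]
      rw [integral_sub (hwrInt.indicator (hrMeas i)) hint1, integral_smul]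
    rw [hind, hDi]
    have hne : (1 : ℝ) - p ≠ 0 := ne_of_gt h1p
    match_scalars <;> field_simp <;> ring
  -- main bound for each x above the Chebyshev radius
  have hmain : ∀ x : ℝ, (⨅ w : W, ⨆ w' : W, ‖(w : H) - (w' : H)‖) < x →
      S ≤ K * x ^ 2 := by
    intro x hx
    obtain ⟨w, hw⟩ := exists_lt_of_ciInf_lt hx
    obtain ⟨Cb, hCb⟩ := Metric.isBounded_iff.mp hWbdd
    have hbdd : BddAbove (Set.range fun w' : W => ‖(w : H) - (w' : H)‖) := by
      refine ⟨Cb, ?_⟩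
      rintro _ ⟨w', rfl⟩
      simpa [dist_eq_norm] using hCb w.2 w'.2
    set Rc : ℝ := ⨆ w' : W, ‖(w : H) - (w' : H)‖ with hRcdef
    have hRc0 : 0 ≤ Rc := le_trans (by simp) (le_ciSup hbdd w)
    have hvle : ∀ ω, ‖wr ω - (w : H)‖ ≤ Rc := fun ω => by
      rw [norm_sub_rev]; exact le_ciSup hbdd ⟨wr ω, hwrW ω⟩
    clear_value Rc
    -- the centered function
    set v : Ω → H := fun ω => wr ω - (w : H) with hvdef
    have hv_int : Integrable v μ := hwrInt.sub (integrable_const _)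
    clear_value v
    have hvsq_int : Integrable (fun ω => ‖v ω‖ ^ 2) μ := by
      have hpt : (fun ω => ‖v ω‖ ^ 2)
          = fun ω => ‖wr ω‖ ^ 2 - 2 * ⟪wr ω, (w : H)⟫ + ‖(w : H)‖ ^ 2 := by
        funext ω; rw [hvdef]; exact norm_sub_sq_real _ _
      rw [hpt]
      exact (hwrSq.sub ((hwrInt.inner_const _).const_mul 2)).add (integrable_const _)
    have hXv_int : ∀ i : Fin n, Integrable (fun ω => bagX r p i ω • v ω) μ :=
      fun i => bagX_smul_int hrMeas hv_int i
    have hDv : ∀ i : Fin n, ∫ ω, bagX r p i ω • v ω ∂μ = D i := by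
      intro i
      have hpt : (fun ω => bagX r p i ω • v ω)
          = fun ω => bagX r p i ω • wr ω - bagX r p i ω • (w : H) := by
        funext ω; rw [hvdef]; rw [smul_sub]
      rw [hpt, integral_sub (bagX_smul_int hrMeas hwrInt i)
        ((bagX_int hrMeas i).smul_const _), integral_smul_const,
        bagX_integral hrMeas hp i, zero_smul, sub_zero, hD]
    -- S = ∫ ⟪U, v⟫
    have hG_int : Integrable (fun ω => ∑ i, ⟪D i, bagX r p i ω • v ω⟫) μ :=
      integrable_finset_sum _ fun i _ => (hXv_int i).const_inner (D i)
    have hSint : ∫ ω, (∑ i, ⟪D i, bagX r p i ω • v ω⟫) ∂μ = S := by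
      rw [integral_finset_sum _ fun i _ => (hXv_int i).const_inner (D i)]
      rw [hS]
      refine Finset.sum_congr rfl fun i _ => ?_
      rw [integral_inner (hXv_int i) (D i), hDv i, real_inner_self_eq_norm_sq]
    have hGU : ∀ ω, (∑ i, ⟪D i, bagX r p i ω • v ω⟫)
        = ⟪∑ i, bagX r p i ω • D i, v ω⟫ := by
      intro ω
      rw [sum_inner]
      refine Finset.sum_congr rfl fun i _ => ?_
      rw [real_inner_smul_left, real_inner_smul_right]
    have hintv2 : ∫ ω, ‖v ω‖ ^ 2 ∂μ ≤ Rc ^ 2 := by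
      have hmono := integral_mono hvsq_int (integrable_const (Rc ^ 2)) (fun ω => by
        have h := hvle ω
        have h0 : (0:ℝ) ≤ ‖wr ω - (w : H)‖ := norm_nonneg _
        simp only [hvdef]
        nlinarith)
      simpa using hmono
    have hintv2_0 : 0 ≤ ∫ ω, ‖v ω‖ ^ 2 ∂μ := integral_nonneg fun ω => sq_nonneg _
    -- the t-parameterized bound
    have ht_ineq : ∀ t : ℝ, 0 < t → S ≤ (t * (K * S) + t⁻¹ * Rc ^ 2) / 2 := by
      intro t ht
      have step1 : S ≤ ∫ ω, (t * ‖∑ i, bagX r p i ω • D i‖ ^ 2 + t⁻¹ * ‖v ω‖ ^ 2) / 2 ∂μ := by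
        rw [← hSint]
        refine integral_mono hG_int
          (((hU2_int.const_mul t).add (hvsq_int.const_mul t⁻¹)).div_const 2) fun ω => ?_
        rw [hGU ω]
        calc ⟪∑ i, bagX r p i ω • D i, v ω⟫
            ≤ ‖∑ i, bagX r p i ω • D i‖ * ‖v ω‖ := real_inner_le_norm _ _
          _ ≤ (t * ‖∑ i, bagX r p i ω • D i‖ ^ 2 + t⁻¹ * ‖v ω‖ ^ 2) / 2 := aux_amgm ht
      have step2 : ∫ ω, (t * ‖∑ i, bagX r p i ω • D i‖ ^ 2 + t⁻¹ * ‖v ω‖ ^ 2) / 2 ∂μ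
          = (t * (∫ ω, ‖∑ i, bagX r p i ω • D i‖ ^ 2 ∂μ)
            + t⁻¹ * (∫ ω, ‖v ω‖ ^ 2 ∂μ)) / 2 := by
        rw [integral_div, integral_add (hU2_int.const_mul t) (hvsq_int.const_mul t⁻¹),
          integral_const_mul, integral_const_mul]
      have h4 : t * (∫ ω, ‖∑ i, bagX r p i ω • D i‖ ^ 2 ∂μ) ≤ t * (K * S) :=
        mul_le_mul_of_nonneg_left hintU2 ht.le
      have h5 : t⁻¹ * (∫ ω, ‖v ω‖ ^ 2 ∂μ) ≤ t⁻¹ * Rc ^ 2 :=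
        mul_le_mul_of_nonneg_left hintv2 (inv_pos.mpr ht).le
      calc S ≤ _ := step1
        _ = _ := step2
        _ ≤ (t * (K * S) + t⁻¹ * Rc ^ 2) / 2 := by linarith
    have hSRc : S ≤ K * Rc ^ 2 := aux_t_trick hSnonneg hKnonneg (sq_nonneg Rc) ht_ineq
    have hRcx : Rc ^ 2 ≤ x ^ 2 := by nlinarith [hw, hRc0]
    calc S ≤ K * Rc ^ 2 := hSRc
      _ ≤ K * x ^ 2 := mul_le_mul_of_nonneg_left hRcx hKnonneg
  -- take the limit x → R⁺
  set RR : ℝ := ⨅ w : W, ⨆ w' : W, ‖(w : H) - (w' : H)‖ with hRRdef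
  have hmain' : ∀ x : ℝ, RR < x → S ≤ K * x ^ 2 := by rw [hRRdef]; exact hmain
  clear_value RR
  have hSfinal : S ≤ K * RR ^ 2 := by
    have hcont : Continuous fun x : ℝ => K * x ^ 2 :=
      continuous_const.mul (continuous_pow 2)
    have hlim : Filter.Tendsto (fun x : ℝ => K * x ^ 2) (nhdsWithin RR (Set.Ioi RR))
        (nhds (K * RR ^ 2)) := (hcont.tendsto RR).mono_left nhdsWithin_le_nhds
    exact ge_of_tendsto hlim (by
      filter_upwards [self_mem_nhdsWithin] with x hx using hmain' x hx)
  -- final arithmetic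
  have hterm : ∀ i ∈ Finset.univ, ‖(∫ ω, wr ω ∂μ) -
      (1 - p)⁻¹ • (∫ ω, Set.indicator {ω | i ∉ r ω} wr ω ∂μ)‖ ^ 2
      = ((1 - p)⁻¹) ^ 2 * ‖D i‖ ^ 2 := by
    intro i _
    rw [hkey1 i, norm_smul, Real.norm_eq_abs, abs_of_nonneg (by positivity), mul_pow]
  rw [Finset.sum_congr rfl hterm, ← Finset.mul_sum, ← hS]
  have step : (1 / (n:ℝ)) * (((1 - p)⁻¹) ^ 2 * S)
      ≤ (1 / (n:ℝ)) * (((1 - p)⁻¹) ^ 2 * (K * RR ^ 2)) := by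
    refine mul_le_mul_of_nonneg_left (mul_le_mul_of_nonneg_left hSfinal (by positivity))
      (by positivity)
  refine le_trans step ?_
  have key : ((n : ℝ) - 1) * K ≤ (n : ℝ) * (p * (1 - p)) := by
    rw [hKdef]; nlinarith
  have lhs_eq : (1 / (n:ℝ)) * (((1 - p)⁻¹) ^ 2 * (K * RR ^ 2))
      = (K * RR ^ 2) / ((n:ℝ) * (1 - p) ^ 2) := by
    field_simp
  rw [lhs_eq, div_mul_div_comm, div_le_div_iff₀ (mul_pos hNpos (pow_pos h1p 2))
    (mul_pos (by linarith : (0:ℝ) < (n:ℝ) - 1) h1p)]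
  nlinarith [mul_le_mul_of_nonneg_left key (mul_nonneg (sq_nonneg RR) h1p.le)]
end
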